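/- Let A be a subfield of a field B and let T = A + X·B[X]. Then T is atomic: every nonzero nonunit element of T is a finite product of irreducible elements of T. -/

import Mathlib

/-- The polynomial composite `A + X·B[X]`: the subring of `B[X]` of polynomials
whose constant coefficient lies in `A`. -/
def Subring.composite {B : Type*} [CommRing B] (A : Subring B) : Subring (Polynomial B) where
  carrier := {f : Polynomial B | f.coeff 0 ∈ A}
  mul_mem' {f g} hf hg := by
    simp only [Set.mem_setOf_eq, Polynomial.mul_coeff_zero] at *
    exact mul_mem hf hg
  one_mem' := by
    simp only [Set.mem_setOf_eq, Polynomial.coeff_one_zero]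
    exact one_mem A
  add_mem' {f g} hf hg := by
    simp only [Set.mem_setOf_eq, Polynomial.coeff_add] at *
    exact add_mem hf hg
  zero_mem' := by
    simp only [Set.mem_setOf_eq, Polynomial.coeff_zero]
    exact zero_mem A
  neg_mem' {f} hf := by
    simp only [Set.mem_setOf_eq, Polynomial.coeff_neg] at *
    exact neg_mem hf

theorem Subring.mem_composite {B : Type*} [CommRing B] (A : Subring B) (f : Polynomial B) :
    f ∈ A.composite ↔ f.coeff 0 ∈ A := Iff.rfl

/-! Degree is additive on `A + X·B[X]`, and its elements of degree zero are the constants of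
the field `A`, so every nonzero one is a unit. Hence a proper divisor of a nonzero element has
strictly smaller degree, strict divisibility is well founded, and every nonzero nonunit factors
into atoms. -/

theorem WfDvdMonoid.of_lt_of_dvdNotUnit {α : Type*} [CommMonoidWithZero α] (f : α → ℕ)
    (hf : ∀ a b : α, b ≠ 0 → DvdNotUnit a b → f a < f b) : WfDvdMonoid α where
  wf := by
    classical
    -- `0` goes to `⊤`: every nonzero element properly divides it.
    refine RelHomClass.wellFounded
      (⟨fun p ↦ if p = 0 then ⊤ else (f p : WithTop ℕ), ?_⟩ : DvdNotUnit →r (· < ·))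
      wellFounded_lt
    intro a b hab
    by_cases hb : b = 0
    · simp [hb, hab.1]
    · simpa [hb, hab.1] using hf a b hb hab

namespace Subfield

open Polynomial

variable {B : Type*} [Field B] {A : Subfield B}

theorem composite_isUnit_of_natDegree_eq_zero {g : A.toSubring.composite} (hg : g ≠ 0)
    (hdeg : (g : B[X]).natDegree = 0) : IsUnit g := by
  set a := (g : B[X]).coeff 0
  have hgC : (g : B[X]) = C a := eq_C_of_natDegree_eq_zero hdeg
  have ha : a ≠ 0 := fun h ↦ hg (Subtype.ext (by simp [hgC, h]))
  have hinv : C a⁻¹ ∈ A.toSubring.composite := by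
    rw [Subring.mem_composite, coeff_C_zero]
    exact A.inv_mem g.2
  refine IsUnit.of_mul_eq_one ⟨C a⁻¹, hinv⟩ (Subtype.ext ?_)
  simp [hgC, ← C_mul, ha]

theorem composite_natDegree_lt_of_dvdNotUnit {f g : A.toSubring.composite} (hg : g ≠ 0)
    (hfg : DvdNotUnit f g) : (f : B[X]).natDegree < (g : B[X]).natDegree := by
  obtain ⟨hf, h, hh, rfl⟩ := hfg
  have h0 : h ≠ 0 := right_ne_zero_of_mul hg
  have hdeg : (h : B[X]).natDegree ≠ 0 := fun hd ↦
    hh (composite_isUnit_of_natDegree_eq_zero h0 hd)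
  rw [Subring.coe_mul, natDegree_mul (by exact_mod_cast hf) (by exact_mod_cast h0)]
  omega

instance : WfDvdMonoid A.toSubring.composite :=
  .of_lt_of_dvdNotUnit (fun g ↦ (g : B[X]).natDegree) fun _ _ ↦
    composite_natDegree_lt_of_dvdNotUnit

end Subfield

theorem composite_atomic {B : Type*} [Field B] (A : Subfield B) :
    ∀ g : A.toSubring.composite, g ≠ 0 → ¬IsUnit g →
      ∃ l : Multiset A.toSubring.composite, (∀ b ∈ l, Irreducible b) ∧ l.prod = g := by
  intro g hg hu
  obtain ⟨l, hl, hprod, -⟩ := (WfDvdMonoid.not_isUnit_iff_exists_factors_eq g hg).mp hu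
  exact ⟨l, hl, hprod⟩
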